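/- Let K be a field and let c, d, C, D ∈ K with (c, d) ≠ (0, 0) and (C, D) ≠ (0, 0). Then g^7_{00cd} and g^7_{00CD} are isomorphic if and only if one of the following holds: (a) c = C = 0 and d ≠ 0 ≠ D; (b) d = D = 0 and c ≠ 0 ≠ C; (c) c, C, d, D are all distinct from zero. -/

import Mathlib

/-!
The diagonal change of basis `e_1 ↦ α e_1`, `e_k ↦ α^(7-k) β e_k` (`k ≥ 2`) rescales `(c, d)` to
`(c α³/β, d α⁴/β)`. Conversely, an isomorphism `f` is pinned down by `x = f e_1` and `v = f e_7`,
since `e_k = (ad e_1)^(7-k) e_7` and `f ∘ ad e_1 = ad x ∘ f`. The relations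
`[e_5, e_7] = c e_2` and `[e_6, e_7] = d e_2 + c e_3` then become polynomial identities in the
coordinates of `x` and `v`; as `f` is invertible modulo the derived algebra, `x₁ v₇ - x₇ v₁ ≠ 0`,
and the identities force `v₁ = 0`, `c x₁³ = C v₇` and `d x₁⁴ = D v₇`. So the two algebras are
isomorphic iff `(C, D) = (c α³/β, d α⁴/β)` for some nonzero `α, β`; such a rescaling preserves
which of `c, d` vanish, and it can match any two pairs with the same zero pattern.
-/

variable (K : Type*) [Field K]

/-- The bracket of the Lie algebra `g^7_{abcd}` on `K^7` (indices `0..6` correspond to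
`e_1..e_7`): the only nonzero brackets among basis vectors are `⁅e_1, e_{i+1}⁆ = e_i` for
`2 ≤ i ≤ 6`, `⁅e_4, e_7⁆ = a e_2`, `⁅e_5, e_6⁆ = b e_2`, `⁅e_5, e_7⁆ = c e_2 + (a+b) e_3`
and `⁅e_6, e_7⁆ = d e_2 + c e_3 + (a+b) e_4`. -/
def g7b (a b c d : K) (x y : Fin 7 → K) : Fin 7 → K :=
  ![0,
    x 0 * y 2 - x 2 * y 0 + a * (x 3 * y 6 - x 6 * y 3) + b * (x 4 * y 5 - x 5 * y 4)
      + c * (x 4 * y 6 - x 6 * y 4) + d * (x 5 * y 6 - x 6 * y 5),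
    x 0 * y 3 - x 3 * y 0 + (a + b) * (x 4 * y 6 - x 6 * y 4) + c * (x 5 * y 6 - x 6 * y 5),
    x 0 * y 4 - x 4 * y 0 + (a + b) * (x 5 * y 6 - x 6 * y 5),
    x 0 * y 5 - x 5 * y 0,
    x 0 * y 6 - x 6 * y 0,
    0]

/-- The Lie algebras `g^7_{abcd}` and `g^7_{ABCD}` are isomorphic: there is a bijective
linear map preserving the brackets. -/
def g7Iso (a b c d A B C D : K) : Prop :=
  ∃ f : (Fin 7 → K) ≃ₗ[K] (Fin 7 → K),
    ∀ x y, f (g7b K a b c d x y) = g7b K A B C D (f x) (f y)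

section

variable {K} {a b c d A B C D : K} {x y : Fin 7 → K}

@[simp] lemma g7b_apply_zero : g7b K a b c d x y 0 = 0 := rfl

lemma g7b_apply_one : g7b K a b c d x y 1 =
    x 0 * y 2 - x 2 * y 0 + a * (x 3 * y 6 - x 6 * y 3) + b * (x 4 * y 5 - x 5 * y 4)
      + c * (x 4 * y 6 - x 6 * y 4) + d * (x 5 * y 6 - x 6 * y 5) := rfl

lemma g7b_apply_two : g7b K a b c d x y 2 =
    x 0 * y 3 - x 3 * y 0 + (a + b) * (x 4 * y 6 - x 6 * y 4) + c * (x 5 * y 6 - x 6 * y 5) := rfl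

lemma g7b_apply_three : g7b K a b c d x y 3 =
    x 0 * y 4 - x 4 * y 0 + (a + b) * (x 5 * y 6 - x 6 * y 5) := rfl

lemma g7b_apply_four : g7b K a b c d x y 4 = x 0 * y 5 - x 5 * y 0 := rfl

lemma g7b_apply_five : g7b K a b c d x y 5 = x 0 * y 6 - x 6 * y 0 := rfl

@[simp] lemma g7b_apply_six : g7b K a b c d x y 6 = 0 := rfl

-- `Pi.single 0 1` and `Pi.single 6 1` are the paper's `e_1` and `e_7`, and
-- `e_k = (ad e_1)^(7-k) e_7` for `2 ≤ k ≤ 7`.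
lemma g7b_bracket_e5_e7 :
    g7b K a b c d ((g7b K a b c d (Pi.single 0 1))^[2] (Pi.single 6 1)) (Pi.single 6 1) =
      c • (g7b K a b c d (Pi.single 0 1))^[5] (Pi.single 6 1)
        + (a + b) • (g7b K a b c d (Pi.single 0 1))^[4] (Pi.single 6 1) := by
  funext i
  fin_cases i <;> simp [g7b_apply_one, g7b_apply_two, g7b_apply_three, g7b_apply_four,
    g7b_apply_five, Function.iterate_succ_apply']

lemma g7b_bracket_e6_e7 :
    g7b K a b c d (g7b K a b c d (Pi.single 0 1) (Pi.single 6 1)) (Pi.single 6 1) =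
      d • (g7b K a b c d (Pi.single 0 1))^[5] (Pi.single 6 1)
        + c • (g7b K a b c d (Pi.single 0 1))^[4] (Pi.single 6 1)
        + (a + b) • (g7b K a b c d (Pi.single 0 1))^[3] (Pi.single 6 1) := by
  funext i
  fin_cases i <;> simp [g7b_apply_one, g7b_apply_two, g7b_apply_three, g7b_apply_four,
    g7b_apply_five, Function.iterate_succ_apply']

lemma eq_smul_single_add_smul_single_add_g7b (y : Fin 7 → K) :
    y = y 0 • Pi.single 0 1 + y 6 • Pi.single 6 1
      + g7b K a b c d (Pi.single 0 1) ![0, 0, y 1, y 2, y 3, y 4, y 5] := by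
  funext i
  fin_cases i <;> simp [g7b_apply_one, g7b_apply_two, g7b_apply_three, g7b_apply_four,
    g7b_apply_five]

lemma g7b_map_apply_zero_six {f : (Fin 7 → K) →ₗ[K] (Fin 7 → K)}
    (hf : ∀ x y, f (g7b K a b c d x y) = g7b K A B C D (f x) (f y)) (y : Fin 7 → K) :
    f y 0 = y 0 * f (Pi.single 0 1) 0 + y 6 * f (Pi.single 6 1) 0 ∧
      f y 6 = y 0 * f (Pi.single 0 1) 6 + y 6 * f (Pi.single 6 1) 6 := by
  rw [eq_smul_single_add_smul_single_add_g7b (a := a) (b := b) (c := c) (d := d) y]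
  simp [hf]

lemma det_ne_zero_of_g7b_equiv (f : (Fin 7 → K) ≃ₗ[K] (Fin 7 → K))
    (hf : ∀ x y, f (g7b K a b c d x y) = g7b K A B C D (f x) (f y)) :
    f (Pi.single 0 1) 0 * f (Pi.single 6 1) 6 - f (Pi.single 0 1) 6 * f (Pi.single 6 1) 0 ≠ 0 := by
  obtain ⟨hz₀, hz₆⟩ := g7b_map_apply_zero_six (f := f.toLinearMap) hf (f.symm (Pi.single 0 1))
  obtain ⟨hw₀, hw₆⟩ := g7b_map_apply_zero_six (f := f.toLinearMap) hf (f.symm (Pi.single 6 1))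
  simp only [LinearEquiv.coe_coe, LinearEquiv.apply_symm_apply, Pi.single_eq_same,
    Pi.single_apply, Fin.reduceEq, if_false] at hz₀ hz₆ hw₀ hw₆
  set Z := f.symm (Pi.single 0 1)
  set W := f.symm (Pi.single 6 1)
  intro h
  -- `Z 0 * W 6 - Z 6 * W 0` is the determinant of the inverse of the block of `f` on the
  -- coordinates `0, 6`.
  exact one_ne_zero <| by
    linear_combination hz₀ + (Z 0 * f (Pi.single 0 1) 0 + Z 6 * f (Pi.single 6 1) 0) * hw₆
      - (W 0 * f (Pi.single 0 1) 0 + W 6 * f (Pi.single 6 1) 0) * hz₆ + (Z 0 * W 6 - Z 6 * W 0) * h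

lemma scale_eqs_of_g7b_relations {x v : Fin 7 → K} (hΔ : x 0 * v 6 - x 6 * v 0 ≠ 0)
    (h₁ : g7b K 0 0 C D ((g7b K 0 0 C D x)^[2] v) v = c • (g7b K 0 0 C D x)^[5] v)
    (h₂ : g7b K 0 0 C D (g7b K 0 0 C D x v) v =
      d • (g7b K 0 0 C D x)^[5] v + c • (g7b K 0 0 C D x)^[4] v) :
    x 0 ≠ 0 ∧ v 6 ≠ 0 ∧ c * x 0 ^ 3 = C * v 6 ∧ d * x 0 ^ 4 = D * v 6 := by
  have hv₀ : v 0 = 0 := by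
    have h := congrFun h₂ 4
    simp only [Function.iterate_succ_apply', Pi.add_apply, Pi.smul_apply,
      smul_eq_mul, g7b_apply_zero, g7b_apply_four, g7b_apply_five, g7b_apply_six, mul_zero,
      zero_mul, sub_self, add_zero, zero_sub, neg_eq_zero, mul_eq_zero] at h
    exact h.resolve_left hΔ
  rw [hv₀, mul_zero, sub_zero] at hΔ
  obtain ⟨hx, hv⟩ := mul_ne_zero_iff.mp hΔ
  have e₁ := congrFun h₁ 1
  have e₂ := congrFun h₂ 1
  simp only [Function.iterate_succ_apply', Function.iterate_zero_apply, Pi.add_apply,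
    Pi.smul_apply, smul_eq_mul, g7b_apply_zero, g7b_apply_one, g7b_apply_two, g7b_apply_three,
    g7b_apply_four, g7b_apply_five, g7b_apply_six, hv₀] at e₁ e₂
  have hc : c * x 0 ^ 3 = C * v 6 :=
    mul_left_cancel₀ (mul_ne_zero (pow_ne_zero 2 hx) hv) (by linear_combination -e₁)
  have hd : d * x 0 ^ 4 = D * v 6 :=
    mul_left_cancel₀ hΔ (by linear_combination -e₂ - x 0 * v 5 * hc)
  exact ⟨hx, hv, hc, hd⟩

lemma exists_scale_of_g7Iso (h : g7Iso K 0 0 c d 0 0 C D) :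
    ∃ α β : K, α ≠ 0 ∧ β ≠ 0 ∧ c * α ^ 3 = C * β ∧ d * α ^ 4 = D * β := by
  obtain ⟨f, hf⟩ := h
  have hsemi : Function.Semiconj f (g7b K 0 0 c d (Pi.single 0 1))
      (g7b K 0 0 C D (f (Pi.single 0 1))) := hf _
  have h₁ := congrArg f (g7b_bracket_e5_e7 (a := 0) (b := 0) (c := c) (d := d))
  have h₂ := congrArg f (g7b_bracket_e6_e7 (a := 0) (b := 0) (c := c) (d := d))
  simp only [hf, map_add, map_smul, (hsemi.iterate_right _).eq, add_zero, zero_smul] at h₁ h₂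
  exact ⟨_, _, scale_eqs_of_g7b_relations (det_ne_zero_of_g7b_equiv f hf) h₁ h₂⟩

lemma g7Iso_of_scale {α β : K} (hα : α ≠ 0) (hβ : β ≠ 0) (ha : a * α ^ 2 = A * β)
    (hb : b * α ^ 2 = B * β) (hc : c * α ^ 3 = C * β) (hd : d * α ^ 4 = D * β) :
    g7Iso K a b c d A B C D := by
  set w : Fin 7 → K := ![α, α ^ 5 * β, α ^ 4 * β, α ^ 3 * β, α ^ 2 * β, α * β, β]
  have hw : ∀ i, w i ≠ 0 := by
    intro i
    fin_cases i <;> simp [w, hα, hβ]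
  refine ⟨LinearEquiv.piCongrRight fun i => LinearEquiv.smulOfNeZero K K (w i) (hw i),
    fun x y => funext fun k => ?_⟩
  fin_cases k <;>
    simp only [w, LinearEquiv.piCongrRight_apply, LinearEquiv.smulOfNeZero_apply, smul_eq_mul,
      Matrix.cons_val, Matrix.cons_val_zero, Matrix.cons_val_one, Fin.reduceFinMk, Fin.mk_one,
      Fin.zero_eta, Fin.isValue, g7b_apply_zero, g7b_apply_one, g7b_apply_two, g7b_apply_three,
      g7b_apply_four, g7b_apply_five, g7b_apply_six, mul_zero]
  · linear_combination α ^ 3 * β * (x 3 * y 6 - x 6 * y 3) * ha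
      + α ^ 3 * β * (x 4 * y 5 - x 5 * y 4) * hb + α ^ 2 * β * (x 4 * y 6 - x 6 * y 4) * hc
      + α * β * (x 5 * y 6 - x 6 * y 5) * hd
  · linear_combination α ^ 2 * β * (x 4 * y 6 - x 6 * y 4) * (ha + hb)
      + α * β * (x 5 * y 6 - x 6 * y 5) * hc
  · linear_combination α * β * (x 5 * y 6 - x 6 * y 5) * (ha + hb)
  · ring
  · ring

theorem g7Iso_zero_zero_iff : g7Iso K 0 0 c d 0 0 C D ↔
    ∃ α β : K, α ≠ 0 ∧ β ≠ 0 ∧ c * α ^ 3 = C * β ∧ d * α ^ 4 = D * β :=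
  ⟨exists_scale_of_g7Iso, fun ⟨_, _, hα, hβ, hc, hd⟩ =>
    g7Iso_of_scale hα hβ (by ring) (by ring) hc hd⟩

lemma exists_scale_iff (h : (c, d) ≠ (0, 0)) :
    (∃ α β : K, α ≠ 0 ∧ β ≠ 0 ∧ c * α ^ 3 = C * β ∧ d * α ^ 4 = D * β) ↔
      (c = 0 ∧ C = 0 ∧ d ≠ 0 ∧ D ≠ 0) ∨ (d = 0 ∧ D = 0 ∧ c ≠ 0 ∧ C ≠ 0) ∨
        (c ≠ 0 ∧ C ≠ 0 ∧ d ≠ 0 ∧ D ≠ 0) := by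
  constructor
  · rintro ⟨α, β, hα, hβ, hc, hd⟩
    have hcC : c = 0 ↔ C = 0 := by
      rw [← mul_eq_zero_iff_right (pow_ne_zero 3 hα), hc, mul_eq_zero_iff_right hβ]
    have hdD : d = 0 ↔ D = 0 := by
      rw [← mul_eq_zero_iff_right (pow_ne_zero 4 hα), hd, mul_eq_zero_iff_right hβ]
    have hcd : ¬(c = 0 ∧ d = 0) := by simpa using h
    tauto
  · rintro (⟨rfl, rfl, hd, hD⟩ | ⟨rfl, rfl, hc, hC⟩ | ⟨hc, hC, hd, hD⟩)
    · exact ⟨1, d / D, one_ne_zero, div_ne_zero hd hD, by ring, by field_simp⟩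
    · exact ⟨1, c / C, one_ne_zero, div_ne_zero hc hC, by field_simp, by ring⟩
    · exact ⟨c * D / (d * C), c * (c * D / (d * C)) ^ 3 / C, by positivity, by positivity,
        by field_simp, by field_simp⟩

end

theorem stmt13 (c d C D : K) (h : (c, d) ≠ (0, 0)) :
    g7Iso K 0 0 c d 0 0 C D ↔
      (c = 0 ∧ C = 0 ∧ d ≠ 0 ∧ D ≠ 0) ∨
      (d = 0 ∧ D = 0 ∧ c ≠ 0 ∧ C ≠ 0) ∨
      (c ≠ 0 ∧ C ≠ 0 ∧ d ≠ 0 ∧ D ≠ 0) :=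
  g7Iso_zero_zero_iff.trans (exists_scale_iff h)
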